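/- arXiv:1309.3806 — 3 statements merged into one kernel-verified Lean document; each statement's English description precedes it below -/
import Mathlib

section
/- Let p be a prime, let Γ be a finitely generated group, and let H be a normal subgroup of Γ of p-power index. Then d_p(H) − 1 ≤ (d_p(Γ) − 1)·[Γ : H]. -/
/-- `grank G` is `d(G)`, the minimal number of generators of `G`. -/
noncomputable def grank (G : Type*) [Group G] : ℕ :=
  sInf {n | ∃ s : Finset G, s.card = n ∧ Subgroup.closure (s : Set G) = ⊤}

open scoped commutatorElement

/-- The subgroup `[G,G]Gᵖ` of `G`, generated (as a normal subgroup; it is in fact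
verbal, hence normal) by all commutators and all `p`-th powers. -/
def commPPow (p : ℕ) (G : Type*) [Group G] : Subgroup G :=
  Subgroup.normalClosure {x | (∃ a b : G, x = ⁅a, b⁆) ∨ ∃ a : G, x = a ^ p}

instance (p : ℕ) (G : Type*) [Group G] : (commPPow p G).Normal :=
  Subgroup.normalClosure_normal

/-- `dp p G = d_p(G) = d(G/[G,G]Gᵖ)`. -/
noncomputable def dp (p : ℕ) (G : Type*) [Group G] : ℕ :=
  grank (G ⧸ commPPow p G)

/-- The absolute `p`-gradient `RG_p(G) = inf (d_p(H) - 1)/[G : H]` over all normal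
subgroups `H` of `G` of `p`-power index. -/
noncomputable def pGradient (p : ℕ) (G : Type*) [Group G] : ℝ :=
  sInf {x | ∃ H : Subgroup G, H.Normal ∧ (∃ k : ℕ, H.index = p ^ k) ∧
    x = ((dp p H : ℝ) - 1) / (H.index : ℝ)}

/-!
Let `N` be the image in `Γ` of the characteristic subgroup `[H,H]Hᵖ` of `H`. It is normal in `Γ`,
and `P = Γ/N` is a finite `p`-group: `H/N = H/[H,H]Hᵖ` is finitely generated of exponent `p`,
and `Γ/H` has `p`-power order. Since `d_p(H) = d(H/N)`, the claim follows from Schreier's bound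
`d(K) - 1 ≤ [G : K] (d(G) - 1)` applied to `H/N ≤ P`, together with `d(P) ≤ d_p(P) ≤ d_p(Γ)`.
The first inequality is the Burnside basis theorem: maximal subgroups of `P` are normal of index
`p`, so `[P,P]Pᵖ` lies in the Frattini subgroup. Schreier's bound is proved for a normal
subgroup of index `p` by taking the transversal `1, g, …, g^(p-1)` for a generator `g ∉ K`:
then all but one of the `p` Schreier generators coming from `g` are trivial. A chain of index-`p` normal subgroups gives the general case.
-/

open Subgroup

lemma grank_eq_rank (G : Type*) [Group G] [Group.FG G] : grank G = Group.rank G := by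
  obtain ⟨S, hS, hSgen⟩ := Group.rank_spec G
  refine le_antisymm (Nat.sInf_le ⟨S, hS, hSgen⟩) ?_
  obtain ⟨T, hT, hTgen⟩ := Nat.sInf_mem (s := {n | ∃ s : Finset G, s.card = n ∧
    closure (s : Set G) = ⊤}) ⟨_, S, hS, hSgen⟩
  rw [grank, ← hT]
  exact Group.rank_le hTgen

section commPPow

variable {p : ℕ} {G K : Type*} [Group G] [Group K]

lemma commutatorElement_mem_commPPow (a b : G) : ⁅a, b⁆ ∈ commPPow p G :=
  subset_normalClosure (Or.inl ⟨a, b, rfl⟩)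

lemma pow_mem_commPPow (a : G) : a ^ p ∈ commPPow p G :=
  subset_normalClosure (Or.inr ⟨a, rfl⟩)

lemma commPPow_le {M : Subgroup G} [M.Normal] (hcomm : ∀ a b : G, ⁅a, b⁆ ∈ M)
    (hpow : ∀ a : G, a ^ p ∈ M) : commPPow p G ≤ M :=
  normalClosure_le_normal fun _ hx ↦ hx.elim (fun ⟨a, b, hab⟩ ↦ hab ▸ hcomm a b)
    fun ⟨a, ha⟩ ↦ ha ▸ hpow a

lemma commPPow_le_comap (f : G →* K) : commPPow p G ≤ (commPPow p K).comap f :=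
  commPPow_le (fun a b ↦ by simpa using commutatorElement_mem_commPPow (f a) (f b))
    fun a ↦ by simpa using pow_mem_commPPow (f a)

instance commPPow_characteristic : (commPPow p G).Characteristic :=
  characteristic_iff_le_comap.mpr fun φ ↦ commPPow_le_comap φ.toMonoidHom

lemma dp_eq_rank (G : Type*) [Group G] [Group.FG G] :
    dp p G = Group.rank (G ⧸ commPPow p G) :=
  grank_eq_rank _

lemma dp_le_of_surjective [Group.FG G] {f : G →* K} (hf : Function.Surjective f) :
    dp p K ≤ dp p G := by
  have : Group.FG K := Group.fg_of_surjective hf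
  rw [dp_eq_rank, dp_eq_rank]
  exact Group.rank_le_of_surjective (QuotientGroup.map _ _ f (commPPow_le_comap f))
    (QuotientGroup.map_surjective_of_surjective _ _ _ ((QuotientGroup.mk'_surjective _).comp hf) _)

lemma finite_quotient_commPPow [Group.FG G] (hp : p ≠ 0) : Finite (G ⧸ commPPow p G) := by
  let _ : CommGroup (G ⧸ commPPow p G) :=
    { mul_comm := fun a b ↦ by
        induction a using QuotientGroup.induction_on
        induction b using QuotientGroup.induction_on
        rw [← commutatorElement_eq_one_iff_mul_comm, ← QuotientGroup.mk'_apply,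
          ← QuotientGroup.mk'_apply, ← map_commutatorElement, QuotientGroup.mk'_apply,
          QuotientGroup.eq_one_iff]
        exact commutatorElement_mem_commPPow _ _ }
  refine CommGroup.finite_of_fg_isMulTorsion _ fun a ↦ ?_
  induction a using QuotientGroup.induction_on with | H a => ?_
  refine isOfFinOrder_iff_pow_eq_one.mpr ⟨p, hp.bot_lt, ?_⟩
  rw [← QuotientGroup.mk_pow, QuotientGroup.eq_one_iff]
  exact pow_mem_commPPow a

end commPPow

section PGroup

variable {p : ℕ} {P : Type*} [Group P] [Finite P]

lemma IsPGroup.index_eq_of_isCoatom (hp : p.Prime) (hP : IsPGroup p P) {M : Subgroup P}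
    (hM : IsCoatom M) : M.index = p := by
  have : Fact p.Prime := ⟨hp⟩
  obtain ⟨n, hn⟩ := IsPGroup.iff_card.mp (hP.to_subgroup M)
  obtain ⟨j, hj⟩ := hP.index M
  have hj0 : j ≠ 0 := by
    rintro rfl
    exact hM.1 (index_eq_one.mp (by rw [hj, pow_zero]))
  have hdvd : p ^ (n + 1) ∣ Nat.card P := by
    rw [← card_mul_index M, hn, hj, ← pow_add]
    exact pow_dvd_pow p (by omega)
  obtain ⟨K, hK, hMK⟩ := Sylow.exists_subgroup_card_pow_succ hdvd hn
  have hKtop : K = ⊤ := hM.2 K <| hMK.lt_of_ne <| by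
    rintro rfl
    exact (Nat.pow_lt_pow_succ hp.one_lt).ne (hn.symm.trans hK)
  have hcard := card_mul_index M
  rw [hn, ← card_top (G := P), ← hKtop, hK, pow_succ] at hcard
  exact Nat.eq_of_mul_eq_mul_left (pow_pos hp.pos n) hcard

lemma IsPGroup.normal_of_isCoatom (hp : p.Prime) (hP : IsPGroup p P) {M : Subgroup P}
    (hM : IsCoatom M) : M.Normal :=
  have : Fact p.Prime := ⟨hp⟩
  have : Group.IsNilpotent P := hP.isNilpotent
  NormalizerCondition.normal_of_coatom M Group.normalizerCondition_of_isNilpotent hM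

end PGroup

section Burnside

variable {p : ℕ} {G P : Type*} [Group G] [Group P] [Finite P]

lemma commPPow_le_of_index_eq_prime (hp : p.Prime) {M : Subgroup G} [M.Normal]
    (hM : M.index = p) : commPPow p G ≤ M := by
  have : Fact p.Prime := ⟨hp⟩
  have hcard : Nat.card (G ⧸ M) = p := by rw [← index_eq_card, hM]
  have : IsCyclic (G ⧸ M) := isCyclic_of_prime_card hcard
  refine commPPow_le (fun a b ↦ ?_) fun a ↦ ?_
  · rw [← QuotientGroup.eq_one_iff, ← QuotientGroup.mk'_apply, map_commutatorElement,
      commutatorElement_eq_one_iff_mul_comm]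
    exact mul_comm' _ _
  · rw [← QuotientGroup.eq_one_iff, QuotientGroup.mk_pow, ← hcard]
    exact pow_card_eq_one'

lemma commPPow_le_frattini (hp : p.Prime) (hP : IsPGroup p P) : commPPow p P ≤ frattini P :=
  le_iInf₂ fun _ hM ↦ have := hP.normal_of_isCoatom hp hM
    commPPow_le_of_index_eq_prime hp (hP.index_eq_of_isCoatom hp hM)

lemma rank_le_dp (hp : p.Prime) (hP : IsPGroup p P) : Group.rank P ≤ dp p P := by
  classical
  rw [dp_eq_rank]
  obtain ⟨s, hs, hsgen⟩ := Group.rank_spec (P ⧸ commPPow p P)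
  set t : Finset P := s.image Quotient.out
  have hmap : (closure (t : Set P)).map (QuotientGroup.mk' (commPPow p P)) = ⊤ := by
    rw [MonoidHom.map_closure, Finset.coe_image, Set.image_image]
    simpa using hsgen
  have hsup := comap_map_eq (QuotientGroup.mk' (commPPow p P)) (closure (t : Set P))
  rw [hmap, comap_top, QuotientGroup.ker_mk'] at hsup
  have htop : closure (t : Set P) = ⊤ := frattini_nongenerating <|
    top_le_iff.mp (hsup.trans_le (sup_le_sup_left (commPPow_le_frattini hp hP) _))
  calc Group.rank P ≤ t.card := Group.rank_le htop
    _ ≤ s.card := Finset.card_image_le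
    _ = _ := hs

end Burnside

section Schreier

open scoped Pointwise

variable {p : ℕ} {G : Type*} [Group G] {H : Subgroup G}

lemma Subgroup.IsComplement.toRightFun_eq {T : Set G} (hT : IsComplement (H : Set G) T)
    {x r : G} (hr : r ∈ T) (hxr : x * r⁻¹ ∈ H) : (hT.toRightFun x : G) = r :=
  congrArg Subtype.val <| (isComplement_iff_existsUnique_mul_inv_mem.mp hT x).unique
    (hT.mul_inv_toRightFun_mem x) (show x * ((⟨r, hr⟩ : T) : G)⁻¹ ∈ H from hxr)

lemma isComplement_image_pow_range [DecidableEq G] [H.Normal] (hp : p.Prime)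
    (hH : H.index = p) {g : G} (hg : g ∉ H) :
    IsComplement (H : Set G) ((Finset.range p).image (g ^ ·) : Set G) := by
  classical
  have : Fact p.Prime := ⟨hp⟩
  have hcard : Nat.card (G ⧸ H) = p := by rw [← index_eq_card, hH]
  have hg1 : (g : G ⧸ H) ≠ 1 := by rwa [Ne, QuotientGroup.eq_one_iff]
  have horder : orderOf (g : G ⧸ H) = p := orderOf_eq_prime (hcard ▸ pow_card_eq_one') hg1
  have hmem_iff : ∀ x r : G, x * r⁻¹ ∈ H ↔ (r : G ⧸ H) = x := fun x r ↦ by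
    rw [← div_eq_mul_inv, ← QuotientGroup.eq_iff_div_mem, eq_comm]
  rw [isComplement_iff_existsUnique_mul_inv_mem]
  intro x
  obtain ⟨i, hi, hix⟩ : ∃ i < p, (g : G ⧸ H) ^ i = x := by
    have := (orderOf_pos_iff.mp (horder ▸ hp.pos)).mem_zpowers_iff_mem_range_orderOf.mp
      (mem_zpowers_of_prime_card hcard hg1 (g' := (x : G ⧸ H)))
    simpa [horder] using this
  refine ⟨⟨g ^ i, by simpa using ⟨i, hi, rfl⟩⟩, (hmem_iff _ _).mpr hix, ?_⟩
  rintro ⟨_, hr⟩ hxr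
  obtain ⟨j, hj, rfl⟩ : ∃ j < p, g ^ j = _ := by simpa using hr
  replace hxr := (hmem_iff _ _).mp hxr
  rw [QuotientGroup.mk_pow, ← hix] at hxr
  simp only [pow_injOn_Iio_orderOf (horder ▸ hj : j < _) (horder ▸ hi : i < _) hxr]

lemma Subgroup.IsComplement.pow_succ_mul_inv_toRightFun_mem {T : Set G}
    (hT : IsComplement (H : Set G) T) {g : G} {i : ℕ} (hpow : ∀ j < p, g ^ j ∈ T)
    (hgp : g ^ p ∈ H) (hi : i < p) :
    g ^ (i + 1) * (hT.toRightFun (g ^ (i + 1)) : G)⁻¹ ∈ ({1, g ^ p} : Set G) := by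
  rcases (show i + 1 < p ∨ i + 1 = p by omega) with h | rfl
  · rw [hT.toRightFun_eq (hpow _ h) (mul_inv_cancel (g ^ (i + 1)) ▸ one_mem H), mul_inv_cancel]
    exact Set.mem_insert _ _
  · rw [hT.toRightFun_eq (pow_zero g ▸ hpow 0 hi.pos) (by rwa [inv_one, mul_one]), inv_one,
      mul_one]
    exact Set.mem_insert_of_mem _ rfl

theorem rank_sub_one_le_mul_of_index_eq_prime [Group.FG G] (hp : p.Prime) (H : Subgroup G)
    [H.Normal] [H.FiniteIndex] (hH : H.index = p) :
    (Group.rank H : ℤ) - 1 ≤ p * ((Group.rank G : ℤ) - 1) := by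
  classical
  obtain ⟨S, hS, hSgen⟩ := Group.rank_spec G
  obtain ⟨g, hgS, hgH⟩ : ∃ g ∈ S, g ∉ H := by
    by_contra! h
    have hHtop : H = ⊤ := top_le_iff.mp (hSgen ▸ (closure_le H).mpr h)
    rw [hHtop, index_top] at hH
    exact hp.one_lt.ne hH
  set R := (Finset.range p).image (g ^ ·)
  have hpowR : ∀ j < p, g ^ j ∈ R := fun j hj ↦ Finset.mem_image_of_mem _ (Finset.mem_range.mpr hj)
  have hR := isComplement_image_pow_range hp hH hgH
  have hgp : g ^ p ∈ H := hH ▸ pow_index_mem H g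
  set T : Finset H := insert ⟨g ^ p, hgp⟩
    ((R * S.erase g).image fun x ↦ ⟨_, hR.mul_inv_toRightFun_mem x⟩)
  have hT : closure (T : Set H) = ⊤ := by
    rw [eq_top_iff, ← closure_mul_image_eq_top' hR (pow_zero g ▸ hpowR 0 hp.pos) hSgen,
      closure_le]
    intro _ hy
    obtain ⟨x, hx, rfl⟩ := Finset.mem_image.mp hy
    obtain ⟨r, hr, s, hs, rfl⟩ := Finset.mem_mul.mp hx
    by_cases hsg : s = g
    · subst hsg
      obtain ⟨i, hi, rfl⟩ : ∃ i < p, s ^ i = r := by simpa [R] using hr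
      show _ ∈ closure (T : Set H)
      simp only [← pow_succ]
      rcases hR.pow_succ_mul_inv_toRightFun_mem hpowR hgp hi with h | h
      · convert (closure (T : Set H)).one_mem using 1
        exact Subtype.ext h
      · exact subset_closure (Finset.mem_insert.mpr (Or.inl (Subtype.ext h)))
    · exact subset_closure (Finset.mem_insert_of_mem (Finset.mem_image_of_mem _
        (Finset.mul_mem_mul hr (Finset.mem_erase.mpr ⟨hsg, hs⟩))))
  have hrank : Group.rank H ≤ p * (S.erase g).card + 1 :=
    calc Group.rank H ≤ T.card := Group.rank_le hT
      _ ≤ (R * S.erase g).card + 1 :=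
          (Finset.card_insert_le _ _).trans (Nat.add_le_add_right Finset.card_image_le _)
      _ ≤ R.card * (S.erase g).card + 1 := Nat.add_le_add_right Finset.card_mul_le _
      _ ≤ p * (S.erase g).card + 1 := by
          gcongr
          exact Finset.card_image_le.trans (by simp)
  have hcard : ((S.erase g).card : ℤ) = Group.rank G - 1 := by
    rw [← hS, ← Finset.card_erase_add_one hgS]
    push_cast
    ring
  zify at hrank
  rw [hcard] at hrank
  linarith

end Schreier

section PPowerIndex

variable {p : ℕ} {G : Type*} [Group G]

lemma exists_normal_index_eq_prime_of_le (hp : p.Prime) {H : Subgroup G} [H.Normal]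
    [Finite (G ⧸ H)] (hH : IsPGroup p (G ⧸ H)) (hHtop : H ≠ ⊤) :
    ∃ M : Subgroup G, H ≤ M ∧ M.Normal ∧ M.index = p := by
  have : Nontrivial (G ⧸ H) := QuotientGroup.nontrivial_iff.mpr hHtop
  obtain ⟨Mbar, hMbar, -⟩ := (eq_top_or_exists_le_coatom (⊥ : Subgroup (G ⧸ H))).resolve_left
    bot_ne_top
  have := hH.normal_of_isCoatom hp hMbar
  refine ⟨Mbar.comap (QuotientGroup.mk' H), QuotientGroup.le_comap_mk' H Mbar, this.comap _, ?_⟩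
  rw [Subgroup.index_comap_of_surjective _ (QuotientGroup.mk'_surjective H),
    hH.index_eq_of_isCoatom hp hMbar]

theorem rank_sub_one_le_index_mul [Group.FG G] (hp : p.Prime) (H : Subgroup G) [H.Normal]
    [H.FiniteIndex] (hH : IsPGroup p (G ⧸ H)) :
    (Group.rank H : ℤ) - 1 ≤ H.index * ((Group.rank G : ℤ) - 1) := by
  have : Fact p.Prime := ⟨hp⟩
  obtain ⟨k, hk⟩ := IsPGroup.iff_card.mp hH
  rw [← index_eq_card] at hk
  rw [hk]
  clear hH
  induction k generalizing G with
  | zero =>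
    rw [pow_zero, index_eq_one] at hk
    subst hk
    rw [Group.rank_congr topEquiv]
    simp
  | succ k ih =>
    obtain ⟨M, hHM, hMn, hM⟩ := exists_normal_index_eq_prime_of_le hp
      (IsPGroup.of_card (index_eq_card H ▸ hk)) fun h ↦ by
        rw [h, index_top] at hk
        exact (Nat.one_lt_pow k.succ_ne_zero hp.one_lt).ne hk
    have : M.FiniteIndex := ⟨hM ▸ hp.ne_zero⟩
    have hrel : (H.subgroupOf M).index = p ^ k := by
      have := relIndex_mul_index hHM
      rw [hM, hk, pow_succ] at this
      exact Nat.eq_of_mul_eq_mul_right hp.pos this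
    have hHsub := ih (H.subgroupOf M) hrel
    rw [Group.rank_congr (subgroupOfEquivOfLe hHM)] at hHsub
    have hMrank := rank_sub_one_le_mul_of_index_eq_prime hp M hM
    calc (Group.rank H : ℤ) - 1 ≤ p ^ k * ((Group.rank M : ℤ) - 1) := hHsub
      _ ≤ p ^ k * (p * ((Group.rank G : ℤ) - 1)) := by gcongr
      _ = (p ^ (k + 1) : ℕ) * ((Group.rank G : ℤ) - 1) := by push_cast; ring

end PPowerIndex

section Reduction

variable {p : ℕ} {G : Type*} [Group G]

noncomputable def quotientMulEquivMapMk (H : Subgroup G) (K : Subgroup H) [K.Normal]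
    [(K.map H.subtype).Normal] : H ⧸ K ≃* H.map (QuotientGroup.mk' (K.map H.subtype)) :=
  let ψ := (QuotientGroup.mk' (K.map H.subtype)).comp H.subtype
  have hker : ψ.ker = K := by
    rw [← MonoidHom.comap_ker, QuotientGroup.ker_mk',
      comap_map_eq_self_of_injective H.subtype_injective]
  have hrange : ψ.range = H.map (QuotientGroup.mk' (K.map H.subtype)) := by
    rw [MonoidHom.range_comp, range_subtype]
  (QuotientGroup.quotientMulEquivOfEq hker.symm).trans
    ((QuotientGroup.quotientKerEquivRange ψ).trans (MulEquiv.subgroupCongr hrange))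

lemma index_map_mk_commPPow (H : Subgroup G) [H.Normal] :
    (H.map (QuotientGroup.mk' ((commPPow p H).map H.subtype))).index = H.index :=
  index_map_eq _ (QuotientGroup.mk'_surjective _) (by simpa using map_subtype_le _)

lemma isPGroup_of_index_eq_pow {K : Subgroup G} [K.Normal] {k : ℕ} (hK : ∀ y ∈ K, y ^ p = 1)
    (hidx : K.index = p ^ k) : IsPGroup p G := fun x ↦
  ⟨k + 1, by rw [pow_succ, pow_mul, ← hidx]; exact hK _ (pow_index_mem K x)⟩

lemma isPGroup_quotient_map_commPPow {H : Subgroup G} [H.Normal] {k : ℕ}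
    (hk : H.index = p ^ k) : IsPGroup p (G ⧸ (commPPow p H).map H.subtype) := by
  set K := H.map (QuotientGroup.mk' ((commPPow p H).map H.subtype))
  have : K.Normal := Normal.map ‹_› _ (QuotientGroup.mk'_surjective _)
  refine isPGroup_of_index_eq_pow (K := K) (fun y hy ↦ ?_) ((index_map_mk_commPPow H).trans hk)
  obtain ⟨h, hh, rfl⟩ := hy
  rw [← map_pow, QuotientGroup.mk'_apply, QuotientGroup.eq_one_iff]
  exact ⟨_, pow_mem_commPPow ⟨h, hh⟩, rfl⟩

end Reduction

/-- If `p` is a prime, `Γ` is a finitely generated group and `H` is a normal subgroup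
of `p`-power index, then `d_p(H) - 1 ≤ (d_p(Γ) - 1)·[Γ : H]`. -/
theorem dp_sub_one_le (p : ℕ) (hp : p.Prime) (Γ : Type) [Group Γ] [Group.FG Γ]
    (H : Subgroup Γ) (hnorm : H.Normal) (k : ℕ) (hk : H.index = p ^ k) :
    (dp p H : ℤ) - 1 ≤ ((dp p Γ : ℤ) - 1) * (H.index : ℤ) := by
  have : H.FiniteIndex := ⟨hk ▸ pow_ne_zero k hp.ne_zero⟩
  set N := (commPPow p H).map H.subtype
  set Hbar := H.map (QuotientGroup.mk' N)
  have e : H ⧸ commPPow p H ≃* Hbar := quotientMulEquivMapMk H _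
  have hidx : Hbar.index = H.index := index_map_mk_commPPow H
  have : Hbar.Normal := hnorm.map _ (QuotientGroup.mk'_surjective N)
  have : Hbar.FiniteIndex := ⟨hidx ▸ index_ne_zero_of_finite⟩
  have : Finite (H ⧸ commPPow p H) := finite_quotient_commPPow hp.ne_zero
  have : Finite Hbar := .of_equiv _ e.toEquiv
  have : Finite (Γ ⧸ N) := (finite_iff_finite_and_finiteIndex Hbar).mpr ⟨this, inferInstance⟩
  have hP : IsPGroup p (Γ ⧸ N) := isPGroup_quotient_map_commPPow hk
  have hdp : dp p H = Group.rank Hbar := by rw [dp_eq_rank, Group.rank_congr e]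
  have hrank : Group.rank (Γ ⧸ N) ≤ dp p Γ :=
    (rank_le_dp hp hP).trans (dp_le_of_surjective (QuotientGroup.mk'_surjective N))
  rw [hdp, ← hidx, mul_comm]
  calc (Group.rank Hbar : ℤ) - 1 ≤ Hbar.index * ((Group.rank (Γ ⧸ N) : ℤ) - 1) :=
        rank_sub_one_le_index_mul hp Hbar (hP.to_quotient Hbar)
    _ ≤ Hbar.index * ((dp p Γ : ℤ) - 1) := by gcongr
end

section
/- Let Γ be a finitely generated residually finite group and {H_n} a lattice of normal subgroups of finite index in Γ with ⋂ H_n = 1. Let L be a subgroup of Γ acting by left multiplication on Γ̂ = Γ̂_{(H_n)}, with orbit equivalence relation E_L^{Γ̂}, and identify L̂ = L̂_{(L∩H_n)} with a closed subgroup of Γ̂. Let S be a graphing of E_L^{Γ̂} and let ḡ ∈ Γ̂ be a right coset representative of L̂ in Γ̂. Then S_ḡ = {(x,y) ∈ L̂ × L̂ : (xḡ, yḡ) ∈ S} is a graphing of the orbit equivalence relation E_L^{L̂} of the left-multiplication action of L on L̂. -/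
/-- The quotient of `Γ` by the normal core of `H` (for normal `H` this is just `Γ ⧸ H`),
regarded as a discrete topological group. -/
def NQuot {Γ : Type*} [Group Γ] (H : Subgroup Γ) : Type _ := Γ ⧸ H.normalCore

noncomputable instance {Γ : Type*} [Group Γ] (H : Subgroup Γ) : Group (NQuot H) :=
  inferInstanceAs (Group (Γ ⧸ H.normalCore))

instance {Γ : Type*} [Group Γ] (H : Subgroup Γ) : TopologicalSpace (NQuot H) := ⊥

instance {Γ : Type*} [Group Γ] (H : Subgroup Γ) : DiscreteTopology (NQuot H) := ⟨rfl⟩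

instance {Γ : Type*} [Group Γ] (H : Subgroup Γ) : IsTopologicalGroup (NQuot H) where
  continuous_mul := continuous_of_discreteTopology
  continuous_inv := continuous_of_discreteTopology

/-- The diagonal homomorphism from `Γ` to the product of its quotients by the
members of `S`. -/
def diagHom {Γ : Type*} [Group Γ] (S : Set (Subgroup Γ)) :
    Γ →* Π H : S, NQuot (H : Subgroup Γ) where
  toFun g := fun _ => QuotientGroup.mk g
  map_one' := rfl
  map_mul' _ _ := rfl

/-- The completion `Γ̂_{(Hₙ)}` of `Γ` with respect to the family of finite-index normal
subgroups `S`: the closure of the image of `Γ` in the product of the (finite, discrete)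
quotients `Γ ⧸ H`, `H ∈ S`.  For a lattice `S` of finite-index normal subgroups this is
(the image of) the inverse limit of the quotients `Γ ⧸ H`. -/
noncomputable def LatticeCompletion {Γ : Type*} [Group Γ] (S : Set (Subgroup Γ)) :
    Subgroup (Π H : S, NQuot (H : Subgroup Γ)) :=
  (diagHom S).range.topologicalClosure

/-- The canonical homomorphism `Γ → Γ̂_{(Hₙ)}`. -/
noncomputable def completionHom {Γ : Type*} [Group Γ] (S : Set (Subgroup Γ)) :
    Γ →* (LatticeCompletion S) :=
  (diagHom S).codRestrict (LatticeCompletion S)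
    (fun g => Subgroup.le_topologicalClosure _ ⟨g, rfl⟩)

noncomputable instance {Γ : Type*} [Group Γ] (S : Set (Subgroup Γ)) :
    MeasurableSpace (LatticeCompletion S) := borel _

instance {Γ : Type*} [Group Γ] (S : Set (Subgroup Γ)) :
    BorelSpace (LatticeCompletion S) := ⟨rfl⟩

/-- The lattice `{L ∩ Hₙ}` of subgroups of `L` induced by a family `S` of subgroups
of the ambient group. -/
def restrictedLattice {Γ : Type*} [Group Γ] (L : Subgroup Γ) (S : Set (Subgroup Γ)) :
    Set (Subgroup L) :=
  (fun H : Subgroup Γ => H.subgroupOf L) '' S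

open MeasureTheory
open scoped ENNReal

/-- The orbit equivalence relation (as a subset of `G × G`) of the action of a
subset `Λ ⊆ G` on `G` by left multiplication. -/
def leftOrbitRel {G : Type*} [Group G] (Λ : Set G) : Set (G × G) :=
  {p | ∃ l ∈ Λ, p.2 = l * p.1}

/-- A graphing of the orbit equivalence relation of the left-multiplication action of
`Λ ⊆ G` on `G`: a Borel subgraph `S` of the relation such that any two equivalent points
are joined by a path of (possibly reversed) edges of `S`. -/
def IsGraphing {G : Type*} [Group G] [MeasurableSpace G] (Λ : Set G) (S : Set (G × G)) :
    Prop :=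
  MeasurableSet S ∧ S ⊆ leftOrbitRel Λ ∧
    ∀ p ∈ leftOrbitRel Λ,
      Relation.ReflTransGen (fun a b => (a, b) ∈ S ∨ (b, a) ∈ S) p.1 p.2

/-- The edge-measure `e(S) = ∫ deg_S(x) dμ(x)` of a subgraph `S ⊆ G × G`. -/
noncomputable def edgeMeasure {G : Type*} [MeasurableSpace G] (μ : Measure G)
    (S : Set (G × G)) : ℝ≥0∞ :=
  ∫⁻ x, ({y | (x, y) ∈ S}.encard : ℝ≥0∞) ∂μ

/-- The cost of the left-multiplication action of `Λ ⊆ G` on `(G, μ)`: the infimum of the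
edge-measures of all graphings of the associated orbit equivalence relation. -/
noncomputable def lmCost {G : Type*} [Group G] [MeasurableSpace G] (μ : Measure G)
    (Λ : Set G) : ℝ≥0∞ :=
  ⨅ S ∈ {S : Set (G × G) | IsGraphing Λ S}, edgeMeasure μ S

def ResiduallyFinite (G : Type*) [Group G] : Prop :=
  ∀ g : G, g ≠ 1 → ∃ H : Subgroup G, H.Normal ∧ H.FiniteIndex ∧ g ∉ H

/-- The copy of `L̂ = L̂_{(L ∩ Hₙ)}` inside `Γ̂ = Γ̂_{(Hₙ)}`: the closed subgroup of `Γ̂`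
obtained as the closure of the image of `L`, with which `L̂` is identified. -/
noncomputable def LhatIn {Γ : Type*} [Group Γ] (L : Subgroup Γ) (S : Set (Subgroup Γ)) :
    Subgroup (LatticeCompletion S) :=
  ((completionHom S).comp L.subtype).range.topologicalClosure

/-- The canonical map `L → L̂ ⊆ Γ̂`. -/
noncomputable def toLhatIn {Γ : Type*} [Group Γ] (L : Subgroup Γ) (S : Set (Subgroup Γ)) :
    L →* (LhatIn L S) :=
  ((completionHom S).comp L.subtype).codRestrict _
    (fun l => Subgroup.le_topologicalClosure _ ⟨l, rfl⟩)

/-- `S_ḡ = {(x, y) ∈ L̂ × L̂ : (xḡ, yḡ) ∈ S}`, for `S ⊆ Γ̂ × Γ̂` and `ḡ ∈ Γ̂`. -/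
def restrictGraph {Γ : Type*} [Group Γ] (L : Subgroup Γ) (S : Set (Subgroup Γ))
    (T : Set ((LatticeCompletion S) × (LatticeCompletion S))) (g : LatticeCompletion S) :
    Set ((LhatIn L S) × (LhatIn L S)) :=
  {p | ((p.1 : LatticeCompletion S) * g, (p.2 : LatticeCompletion S) * g) ∈ T}

/-! Right multiplication by `g` commutes with the left action of `Λ ⊆ K`, so it maps the orbit
relation of `Λ` on `K` into that on `G`, and a path of `T`-edges starting in the coset `K g`
never leaves it: each edge multiplies on the left by an element of `Λ ⊆ K`. Pulling such a path
back along `x ↦ x g` joins any two `Λ`-equivalent points of `K` by edges of the restricted graph. -/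

theorem Relation.ReflTransGen.exists_comap {α β : Type*} {r : β → β → Prop} {f : α → β}
    (hf : ∀ a b, r (f a) b → b ∈ Set.range f) {a : α} {b : β} (h : ReflTransGen r (f a) b) :
    ∃ c, f c = b ∧ ReflTransGen (fun x y => r (f x) (f y)) a c := by
  induction h with
  | refl => exact ⟨a, rfl, .refl⟩
  | tail _ hbc ih =>
    obtain ⟨c, rfl, hac⟩ := ih
    obtain ⟨d, rfl⟩ := hf _ _ hbc
    exact ⟨d, rfl, hac.tail hbc⟩

section LeftOrbitRel

variable {G : Type*} [Group G]

theorem mk_mul_right_mem_leftOrbitRel {Λ : Set G} {a b : G} (g : G) :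
    (a * g, b * g) ∈ leftOrbitRel Λ ↔ (a, b) ∈ leftOrbitRel Λ := by
  simp only [leftOrbitRel, Set.mem_ofPred_eq, ← mul_assoc, mul_left_inj]

theorem Subgroup.mk_coe_mem_leftOrbitRel_image {K : Subgroup G} {Λ : Set K} {x y : K} :
    ((x : G), (y : G)) ∈ leftOrbitRel (((↑) : K → G) '' Λ) ↔ (x, y) ∈ leftOrbitRel Λ := by
  simp only [leftOrbitRel, Set.mem_ofPred_eq, Set.exists_mem_image, ← Subgroup.coe_mul,
    Subtype.ext_iff]

theorem Subgroup.mem_rightCoset_of_mem_leftOrbitRel_image {K : Subgroup G} {Λ : Set K}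
    {a b g : G} (ha : a ∈ Set.range fun x : K => (x : G) * g)
    (hab : (a, b) ∈ leftOrbitRel (((↑) : K → G) '' Λ) ∨ (b, a) ∈ leftOrbitRel ((↑) '' Λ)) :
    b ∈ Set.range fun x : K => (x : G) * g := by
  obtain ⟨x, rfl⟩ := ha
  rcases hab with ⟨_, ⟨l, -, rfl⟩, hb⟩ | ⟨_, ⟨l, -, rfl⟩, hb⟩
  · obtain rfl : b = l * (x * g) := hb
    exact ⟨l * x, by simp only [Subgroup.coe_mul, mul_assoc]⟩
  · obtain rfl : b = l⁻¹ * (x * g) := eq_inv_mul_of_mul_eq (hb.symm : (l : G) * b = x * g)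
    exact ⟨l⁻¹ * x, by simp only [Subgroup.coe_mul, Subgroup.coe_inv, mul_assoc]⟩

theorem IsGraphing.preimage_mul_right [MeasurableSpace G] [MeasurableMul G] {K : Subgroup G}
    {Λ : Set K} {T : Set (G × G)} (hT : IsGraphing (((↑) : K → G) '' Λ) T) (g : G) :
    IsGraphing Λ ((fun p : K × K => ((p.1 : G) * g, (p.2 : G) * g)) ⁻¹' T) := by
  obtain ⟨hT_meas, hT_sub, hT_conn⟩ := hT
  have h_meas : Measurable fun x : K => (x : G) * g :=
    (measurable_mul_const g).comp measurable_subtype_coe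
  refine ⟨(h_meas.comp measurable_fst).prodMk (h_meas.comp measurable_snd) hT_meas, ?_, ?_⟩
  · rintro ⟨x, y⟩ hxy
    exact Subgroup.mk_coe_mem_leftOrbitRel_image.1 <|
      (mk_mul_right_mem_leftOrbitRel g).1 (hT_sub hxy)
  · rintro ⟨x, y⟩ hxy
    have h_path := hT_conn _ <| (mk_mul_right_mem_leftOrbitRel g).2 <|
      Subgroup.mk_coe_mem_leftOrbitRel_image.2 hxy
    obtain ⟨z, hz, h_path'⟩ := h_path.exists_comap fun a b hab =>
      Subgroup.mem_rightCoset_of_mem_leftOrbitRel_image ⟨a, rfl⟩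
        (hab.imp (hT_sub ·) (hT_sub ·))
    obtain rfl : z = y := Subtype.ext (mul_right_cancel hz)
    exact h_path'

end LeftOrbitRel

theorem isGraphing_restrictGraph_general (Γ : Type) [Group Γ]
    (S : Set (Subgroup Γ))
    (L : Subgroup Γ)
    (T : Set ((LatticeCompletion S) × (LatticeCompletion S)))
    (hT : IsGraphing (Set.range ((completionHom S).comp L.subtype)) T)
    (g : LatticeCompletion S) :
    IsGraphing (Set.range (toLhatIn L S)) (restrictGraph L S T g) := by
  have h_range : Set.range ((completionHom S).comp L.subtype) =
      ((↑) : LhatIn L S → LatticeCompletion S) '' Set.range (toLhatIn L S) :=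
    Set.range_comp Subtype.val (toLhatIn L S)
  exact (h_range ▸ hT).preimage_mul_right g

/-- **Restricting a graphing to a coset.**  Let `Γ` be a finitely generated residually
finite group and `S = {Hₙ}` a lattice of finite-index normal subgroups with `⋂ Hₙ = 1`.
Let `L ≤ Γ` act by left multiplication on `Γ̂ = Γ̂_{(Hₙ)}`, and identify `L̂ = L̂_{(L∩Hₙ)}`
with the closed subgroup `LhatIn L S` of `Γ̂`.  If `T` is a graphing of the orbit relation
`E_L^{Γ̂}` and `ḡ ∈ Γ̂` (a representative of its right coset `L̂ḡ`), then
`S_ḡ = {(x,y) ∈ L̂ × L̂ : (xḡ, yḡ) ∈ T}` is a graphing of the orbit relation `E_L^{L̂}` of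
the left-multiplication action of `L` on `L̂`. -/
theorem isGraphing_restrictGraph (Γ : Type) [Group Γ] [Group.FG Γ]
    (hres : ResiduallyFinite Γ)
    (S : Set (Subgroup Γ)) (hne : S.Nonempty)
    (hnorm : ∀ H ∈ S, H.Normal) (hfi : ∀ H ∈ S, H.FiniteIndex)
    (hmeet : ∀ H ∈ S, ∀ K ∈ S, H ⊓ K ∈ S) (htriv : sInf S = ⊥)
    (L : Subgroup Γ)
    (T : Set ((LatticeCompletion S) × (LatticeCompletion S)))
    (hT : IsGraphing (Set.range ((completionHom S).comp L.subtype)) T)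
    (g : LatticeCompletion S) :
    IsGraphing (Set.range (toLhatIn L S)) (restrictGraph L S T g) :=
  isGraphing_restrictGraph_general Γ S L T hT g
end

section
/- Let Γ be a finitely generated residually finite group and {H_n} a lattice of normal subgroups of finite index in Γ with ⋂ H_n = 1. Let L be a subgroup of Γ, let Γ̂ = Γ̂_{(H_n)}, and identify L̂ = L̂_{(L∩H_n)} with a closed subgroup of Γ̂. There exists a right transversal T of L̂ in Γ̂ (the image of a continuous section of the projection Γ̂ → Γ̂/L̂) such that every graphing S′ of the orbit equivalence relation E_L^{L̂} of the left-multiplication action of L on L̂ is of the form S′ = S_t = {(x,y) ∈ L̂ × L̂ : (xt, yt) ∈ S} for some graphing S of the orbit equivalence relation E_L^{Γ̂} of the left-multiplication action of L on Γ̂ and some t ∈ T. -/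
open MeasureTheory
open scoped ENNReal

/-! Since `Γ` is finitely generated it has only countably many finite-index subgroups, so `Γ̂`
sits in a countable product of finite discrete groups. Enumerating the coordinates, pick in
every right coset `L̂ g` its lexicographically least element. Coordinate `n` of that minimum
only depends on the first `n + 1` coordinates of `g`, so this selector is continuous;
normalised to fix `1`, it yields a transversal through `t = 1`. A graphing `S'` of `E_L^{L̂}`
then extends to a graphing of `E_L^{Γ̂}` by adding every orbit edge outside `L̂ × L̂`, and
`S'` is its restriction at `t = 1`. -/

open Topology

theorem Group.countable_of_fg (G : Type*) [Group G] [Group.FG G] : Countable G := by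
  obtain ⟨s, hs, φ, hφ⟩ := Monoid.fg_iff_exists_freeMonoid_hom_surjective.mp
    (inferInstance : Monoid.FG G)
  have : Countable s := hs.to_subtype.to_countable
  exact hφ.countable

/-- By Schreier's lemma a finite-index subgroup of a finitely generated group is itself
finitely generated, hence the closure of a finite subset of a countable group. -/
theorem Subgroup.countable_setOf_finiteIndex (G : Type*) [Group G] [Group.FG G] :
    {H : Subgroup G | H.FiniteIndex}.Countable := by
  have := Group.countable_of_fg G
  refine (Set.countable_range fun s : Finset G => Subgroup.closure (s : Set G)).mono ?_
  intro H (hH : H.FiniteIndex)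
  obtain ⟨s, hs⟩ := (Group.fg_iff_subgroup_fg H).mp (Subgroup.fg_of_index_ne_zero H)
  exact ⟨s, hs⟩

section LexMin

variable {X : Type*} (f : ℕ → X → ℕ)

def lexMinChain (A : Set X) : ℕ → Set X
  | 0 => A
  | n + 1 => {x ∈ lexMinChain A n | f n x = sInf (f n '' lexMinChain A n)}

variable {f}

theorem lexMinChain_succ_subset (A : Set X) (n : ℕ) :
    lexMinChain f A (n + 1) ⊆ lexMinChain f A n :=
  fun _ hx => hx.1

theorem lexMinChain_subset (A : Set X) : ∀ n, lexMinChain f A n ⊆ A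
  | 0 => subset_rfl
  | n + 1 => (lexMinChain_succ_subset A n).trans (lexMinChain_subset A n)

theorem lexMinChain_nonempty {A : Set X} (hA : A.Nonempty) :
    ∀ n, (lexMinChain f A n).Nonempty
  | 0 => hA
  | n + 1 => by
    obtain ⟨x, hx, hmin⟩ := Nat.sInf_mem ((lexMinChain_nonempty hA n).image (f n))
    exact ⟨x, hx, hmin⟩

theorem apply_eq_of_mem_lexMinChain_succ {A : Set X} {n : ℕ} {x y : X}
    (hx : x ∈ lexMinChain f A (n + 1)) (hy : y ∈ lexMinChain f A (n + 1)) : f n x = f n y :=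
  hx.2.trans hy.2.symm

theorem eq_of_mem_iInter_lexMinChain (hf : ∀ x y, (∀ n, f n x = f n y) → x = y)
    {A : Set X} {x y : X} (hx : x ∈ ⋂ n, lexMinChain f A n)
    (hy : y ∈ ⋂ n, lexMinChain f A n) : x = y := by
  rw [Set.mem_iInter] at hx hy
  exact hf x y fun n => apply_eq_of_mem_lexMinChain_succ (hx (n + 1)) (hy (n + 1))

theorem lexMinChain_image {A : Set X} {h : X → X} {m : ℕ}
    (hh : ∀ i < m, ∀ x ∈ A, f i (h x) = f i x) :
    ∀ n ≤ m, lexMinChain f (h '' A) n = h '' lexMinChain f A n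
  | 0, _ => rfl
  | n + 1, hn => by
    have hfh : ∀ x ∈ lexMinChain f A n, f n (h x) = f n x :=
      fun x hx => hh n hn x (lexMinChain_subset A n hx)
    have hval : f n '' (h '' lexMinChain f A n) = f n '' lexMinChain f A n := by
      rw [Set.image_image]
      exact Set.image_congr hfh
    simp only [lexMinChain, lexMinChain_image hh n (Nat.le_of_succ_le hn), hval]
    ext y
    constructor
    · rintro ⟨⟨x, hx, rfl⟩, hmin⟩
      exact ⟨x, ⟨hx, (hfh x hx).symm.trans hmin⟩, rfl⟩
    · rintro ⟨x, ⟨hx, hmin⟩, rfl⟩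
      exact ⟨⟨x, hx, rfl⟩, (hfh x hx).trans hmin⟩

variable [TopologicalSpace X]

theorem isClosed_lexMinChain (hf : ∀ n, Continuous (f n)) {A : Set X} (hA : IsClosed A) :
    ∀ n, IsClosed (lexMinChain f A n)
  | 0 => hA
  | n + 1 => (isClosed_lexMinChain hf hA n).inter (isClosed_eq (hf n) continuous_const)

theorem nonempty_iInter_lexMinChain [CompactSpace X] (hf : ∀ n, Continuous (f n)) {A : Set X}
    (hA : IsClosed A) (hne : A.Nonempty) : (⋂ n, lexMinChain f A n).Nonempty :=
  IsCompact.nonempty_iInter_of_sequence_nonempty_isCompact_isClosed _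
    (lexMinChain_succ_subset A) (lexMinChain_nonempty hne)
    (isClosed_lexMinChain hf hA 0).isCompact (isClosed_lexMinChain hf hA)

end LexMin

section RightCosetSelector

variable {G : Type*} [Group G] {f : ℕ → G → ℕ}

/-- Right multiplication by `g⁻¹ * g'` carries `K g` onto `K g'` and preserves the first
`n + 1` coordinates. -/
theorem apply_eq_of_mem_lexMinChain_rightCoset
    (hf : ∀ n x y y', f n y = f n y' → f n (x * y) = f n (x * y')) (K : Subgroup G)
    {g g' : G} {n : ℕ} (hgg' : ∀ i < n + 1, f i g = f i g') {x x' : G}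
    (hx : x ∈ lexMinChain f ((· * g) '' K) (n + 1))
    (hx' : x' ∈ lexMinChain f ((· * g') '' K) (n + 1)) : f n x = f n x' := by
  have hcoset : (· * g') '' (K : Set G) = (· * (g⁻¹ * g')) '' ((· * g) '' K) := by
    rw [Set.image_image]
    simp only [mul_assoc, mul_inv_cancel_left]
  have hh : ∀ i < n + 1, ∀ y ∈ (· * g) '' (K : Set G), f i (y * (g⁻¹ * g')) = f i y := by
    rintro i hi _ ⟨ℓ, -, rfl⟩
    simp only [mul_assoc, mul_inv_cancel_left]
    exact (hf i ℓ g g' (hgg' i hi)).symm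
  rw [hcoset, lexMinChain_image hh (n + 1) le_rfl] at hx'
  obtain ⟨y, hy, rfl⟩ := hx'
  rw [hh n n.lt_succ_self y (lexMinChain_subset _ _ hy)]
  exact apply_eq_of_mem_lexMinChain_succ hx hy

variable [TopologicalSpace G] [ContinuousMul G] [CompactSpace G]

theorem exists_continuous_rightCoset_selector_of_coords (hf_cont : ∀ n, Continuous (f n))
    (hf_sep : ∀ x y, (∀ n, f n x = f n y) → x = y)
    (hf_mul : ∀ n x y y', f n y = f n y' → f n (x * y) = f n (x * y'))
    (K : Subgroup G) (hK : IsClosed (K : Set G)) :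
    ∃ σ : G → G, Continuous σ ∧ (∀ ℓ ∈ K, ∀ g, σ (ℓ * g) = σ g) ∧
      ∀ g, ∃ ℓ ∈ K, g = ℓ * σ g := by
  have hclosed (g : G) : IsClosed ((· * g) '' (K : Set G)) := by
    rw [Set.image_mul_right]
    exact hK.preimage (continuous_mul_const _)
  have hne (g : G) : ((· * g) '' (K : Set G)).Nonempty := ⟨g, 1, K.one_mem, one_mul g⟩
  choose σ hσ using fun g => nonempty_iInter_lexMinChain hf_cont (hclosed g) (hne g)
  have hσ_mem (g : G) (n : ℕ) : σ g ∈ lexMinChain f ((· * g) '' K) n :=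
    Set.mem_iInter.mp (hσ g) n
  have hE : IsClosedEmbedding fun g n => f n g :=
    (continuous_pi hf_cont).isClosedEmbedding fun x y hxy => hf_sep x y (congrFun hxy)
  refine ⟨σ, hE.isInducing.continuous_iff.mpr (continuous_pi fun n => ?_), ?_, ?_⟩
  · refine ((IsLocallyConstant.iff_eventually_eq _).mpr fun g => ?_).continuous
    have hnear : ∀ᶠ g' in 𝓝 g, ∀ i ∈ Set.Iio (n + 1), f i g = f i g' :=
      (Filter.eventually_all_finite (Set.finite_Iio _)).mpr fun i _ =>
        (((IsLocallyConstant.iff_continuous _).mpr (hf_cont i)).eventually_eq g).mono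
          fun _ h => h.symm
    filter_upwards [hnear] with g' hg'
    exact (apply_eq_of_mem_lexMinChain_rightCoset hf_mul K hg' (hσ_mem g (n + 1))
      (hσ_mem g' (n + 1))).symm
  · intro ℓ hℓ g
    have hcoset : (· * (ℓ * g)) '' (K : Set G) = (· * g) '' K := by
      rw [Set.image_mul_right, Set.image_mul_right]
      ext x
      simp only [Set.mem_preimage, mul_inv_rev, ← mul_assoc, SetLike.mem_coe]
      exact K.mul_mem_cancel_right (inv_mem hℓ)
    exact eq_of_mem_iInter_lexMinChain hf_sep (hcoset ▸ hσ (ℓ * g)) (hσ g)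
  · intro g
    obtain ⟨ℓ, hℓ, hℓg⟩ := hσ_mem g 0
    exact ⟨ℓ⁻¹, inv_mem hℓ, by rw [← hℓg, inv_mul_cancel_left]⟩

end RightCosetSelector

theorem exists_continuous_rightCoset_selector {G I : Type*} [Group G] [TopologicalSpace G]
    [ContinuousMul G] [CompactSpace G] [Countable I] {Q : I → Type*} [∀ i, Group (Q i)]
    [∀ i, TopologicalSpace (Q i)] [∀ i, DiscreteTopology (Q i)] [∀ i, Countable (Q i)]
    (φ : ∀ i, G →* Q i) (hφ : ∀ i, Continuous (φ i))
    (hsep : ∀ x y, (∀ i, φ i x = φ i y) → x = y)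
    (K : Subgroup G) (hK : IsClosed (K : Set G)) :
    ∃ σ : G → G, Continuous σ ∧ σ 1 = 1 ∧ (∀ ℓ ∈ K, ∀ g, σ (ℓ * g) = σ g) ∧
      ∀ g, ∃ ℓ ∈ K, g = ℓ * σ g := by
  -- enumerating `Option I` rather than `I` allows `I = ∅`
  obtain ⟨e, he⟩ := exists_surjective_nat (Option I)
  choose ι hι using fun i => exists_injective_nat (Q i)
  let f : ℕ → G → ℕ := fun n g => (e n).elim 0 fun i => ι i (φ i g)
  have hf_cont (n : ℕ) : Continuous (f n) := by
    cases hn : e n with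
    | none => simpa only [f, hn, Option.elim_none] using continuous_const
    | some i =>
      simp only [f, hn, Option.elim_some]
      exact continuous_of_discreteTopology.comp (hφ i)
  have hf_sep (x y : G) (hxy : ∀ n, f n x = f n y) : x = y := by
    refine hsep x y fun i => hι i ?_
    obtain ⟨n, hn⟩ := he (some i)
    simpa [f, hn] using hxy n
  have hf_mul (n : ℕ) (x y y' : G) (hyy' : f n y = f n y') : f n (x * y) = f n (x * y') := by
    cases hn : e n with
    | none => simp [f, hn]
    | some i =>
      simp only [f, hn, Option.elim_some, map_mul] at hyy' ⊢
      rw [hι i hyy']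
  obtain ⟨σ, hσ_cont, hσ_inv, hσ_sec⟩ :=
    exists_continuous_rightCoset_selector_of_coords hf_cont hf_sep hf_mul K hK
  obtain ⟨ℓ₁, hℓ₁, hσ₁⟩ := hσ_sec 1
  have hσ₁_mem : σ 1 ∈ K := by
    rw [eq_inv_of_mul_eq_one_right hσ₁.symm]
    exact inv_mem hℓ₁
  refine ⟨fun g => (σ 1)⁻¹ * σ g, continuous_const.mul hσ_cont, inv_mul_cancel _,
    fun ℓ hℓ g => congrArg _ (hσ_inv ℓ hℓ g), fun g => ?_⟩
  obtain ⟨ℓ, hℓ, hg⟩ := hσ_sec g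
  exact ⟨ℓ * σ 1, mul_mem hℓ hσ₁_mem, by rw [mul_assoc, mul_inv_cancel_left]; exact hg⟩

section Graphing

variable {G : Type*} [Group G]

theorem measurableSet_leftOrbitRel [MeasurableSpace G] [MeasurableMul G] [MeasurableEq G]
    {Λ : Set G} (hΛ : Λ.Countable) : MeasurableSet (leftOrbitRel Λ) := by
  have h : leftOrbitRel Λ = ⋃ l ∈ Λ, {p : G × G | p.2 = l * p.1} := by
    ext p
    simp [leftOrbitRel]
  rw [h]
  exact MeasurableSet.biUnion hΛ fun l _ => measurableSet_eq_fun measurable_snd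
    (measurable_fst.const_mul l)

/-- On `K × K` this graph is `S'`; off `K × K` it contains every edge of the orbit relation,
which takes care of connectivity there. -/
def extendGraph (K : Subgroup G) (Λ : Set K) (S' : Set (K × K)) : Set (G × G) :=
  Prod.map (↑) (↑) '' S' ∪ (leftOrbitRel ((↑) '' Λ) \ (K : Set G) ×ˢ (K : Set G))

variable {K : Subgroup G} {Λ : Set K} {S' : Set (K × K)}

theorem preimage_extendGraph : Prod.map (↑) (↑) ⁻¹' extendGraph K Λ S' = S' := by
  ext p
  constructor
  · rintro (⟨q, hq, hqp⟩ | ⟨-, hp⟩)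
    · rwa [← Prod.map_injective.mpr ⟨Subtype.val_injective, Subtype.val_injective⟩ hqp]
    · exact absurd ⟨p.1.2, p.2.2⟩ hp
  · exact fun hp => Or.inl ⟨p, hp, rfl⟩

theorem isGraphing_extendGraph [MeasurableSpace G] (hK : MeasurableSet (K : Set G))
    (hrel : MeasurableSet (leftOrbitRel ((↑) '' Λ : Set G))) (hS' : IsGraphing Λ S') :
    IsGraphing ((↑) '' Λ) (extendGraph K Λ S') := by
  obtain ⟨hmeas, hsub, hconn⟩ := hS'
  have hval := MeasurableEmbedding.subtype_coe hK
  refine ⟨((hval.prodMap hval).measurableSet_image.mpr hmeas).union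
    (hrel.diff (hK.prod hK)), Set.union_subset ?_ Set.sdiff_subset, ?_⟩
  · rintro _ ⟨p, hp, rfl⟩
    obtain ⟨l, hl, hpl⟩ := hsub hp
    exact ⟨l, ⟨l, hl, rfl⟩, congrArg Subtype.val hpl⟩
  · rintro ⟨a, b⟩ ⟨_, ⟨l, hl, rfl⟩, rfl : b = l * a⟩
    by_cases ha : a ∈ K
    · refine Relation.ReflTransGen.lift Subtype.val (fun u v huv => ?_) _ _
        (hconn (⟨a, ha⟩, l * ⟨a, ha⟩) ⟨l, hl, rfl⟩)
      exact huv.imp (fun h => Or.inl ⟨_, h, rfl⟩) (fun h => Or.inl ⟨_, h, rfl⟩)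
    · exact .single (Or.inl (Or.inr ⟨⟨l, ⟨l, hl, rfl⟩, rfl⟩, fun h => ha h.1⟩))

end Graphing

section Completion

variable {Γ : Type*} [Group Γ] (S : Set (Subgroup Γ))

theorem compactSpace_latticeCompletion (hfi : ∀ H ∈ S, H.FiniteIndex) :
    CompactSpace (LatticeCompletion S) := by
  have (H : S) : Finite (NQuot (H : Subgroup Γ)) :=
    have := hfi H H.2
    inferInstanceAs (Finite (Γ ⧸ (H : Subgroup Γ).normalCore))
  exact isCompact_iff_compactSpace.mp (Subgroup.isClosed_topologicalClosure _).isCompact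

instance [Countable Γ] (H : Subgroup Γ) : Countable (NQuot H) :=
  QuotientGroup.mk_surjective.countable

instance [Countable Γ] [Countable S] : SecondCountableTopology (LatticeCompletion S) :=
  inferInstanceAs <| SecondCountableTopology
    (LatticeCompletion S : Set (Π H : S, NQuot (H : Subgroup Γ)))

end Completion

theorem exists_transversal_graphing_general (Γ : Type) [Group Γ] [Group.FG Γ]
    (S : Set (Subgroup Γ)) (hfi : ∀ H ∈ S, H.FiniteIndex)
    (L : Subgroup Γ) :
    ∃ σ : (LatticeCompletion S) → (LatticeCompletion S),
      Continuous σ ∧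
      (∀ ℓ ∈ LhatIn L S, ∀ g, σ (ℓ * g) = σ g) ∧
      (∀ g, ∃ ℓ ∈ LhatIn L S, g = ℓ * σ g) ∧
      ∀ S' : Set ((LhatIn L S) × (LhatIn L S)),
        IsGraphing (Set.range (toLhatIn L S)) S' →
        ∃ T : Set ((LatticeCompletion S) × (LatticeCompletion S)),
          IsGraphing (Set.range ((completionHom S).comp L.subtype)) T ∧
          ∃ t ∈ Set.range σ, S' = restrictGraph L S T t := by
  have := Group.countable_of_fg Γ
  have : Countable S := ((Subgroup.countable_setOf_finiteIndex Γ).mono hfi).to_subtype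
  have := compactSpace_latticeCompletion S hfi
  have hL : IsClosed (LhatIn L S : Set (LatticeCompletion S)) :=
    Subgroup.isClosed_topologicalClosure _
  obtain ⟨σ, hσ_cont, hσ₁, hσ_inv, hσ_sec⟩ := exists_continuous_rightCoset_selector
    (fun H : S => (Pi.evalMonoidHom _ H).comp (LatticeCompletion S).subtype)
    (fun H => (continuous_apply H).comp continuous_subtype_val)
    (fun x y hxy => Subtype.ext (funext hxy)) (LhatIn L S) hL
  refine ⟨σ, hσ_cont, hσ_inv, hσ_sec, fun S' hS' =>
    ⟨extendGraph _ (Set.range (toLhatIn L S)) S', ?_, 1, ⟨1, hσ₁⟩, ?_⟩⟩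
  · have hΛ : Set.range ((completionHom S).comp L.subtype) = (↑) '' Set.range (toLhatIn L S) :=
      Set.range_comp Subtype.val (toLhatIn L S)
    rw [hΛ]
    exact isGraphing_extendGraph hL.measurableSet
      (measurableSet_leftOrbitRel ((Set.countable_range _).image _)) hS'
  · simp only [restrictGraph, mul_one]
    exact preimage_extendGraph.symm

/-- **Every graphing of the restricted action comes from a graphing upstairs.**  Let `Γ` be
a finitely generated residually finite group, `S = {Hₙ}` a lattice of finite-index normal
subgroups with `⋂ Hₙ = 1`, and `L ≤ Γ`; identify `L̂ = L̂_{(L∩Hₙ)}` with the closed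
subgroup `LhatIn L S` of `Γ̂ = Γ̂_{(Hₙ)}`.  There is a right transversal of `L̂` in `Γ̂`,
given as the image `T = range σ` of a continuous selector `σ` of right `L̂`-cosets (i.e.
`σ` is constant on the right cosets `L̂g` and `σ g` lies in the coset of `g`; equivalently
`σ` is a continuous section of `Γ̂ → Γ̂/L̂` composed with the projection), such that every
graphing `S'` of the orbit relation `E_L^{L̂}` of the left-multiplication action of `L` on
`L̂` has the form `S' = S_t = {(x,y) ∈ L̂ × L̂ : (xt, yt) ∈ S}` for some graphing `S` of the
orbit relation `E_L^{Γ̂}` and some `t ∈ T`. -/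
theorem exists_transversal_graphing (Γ : Type) [Group Γ] [Group.FG Γ]
    (hres : ResiduallyFinite Γ)
    (S : Set (Subgroup Γ)) (hne : S.Nonempty)
    (hnorm : ∀ H ∈ S, H.Normal) (hfi : ∀ H ∈ S, H.FiniteIndex)
    (hmeet : ∀ H ∈ S, ∀ K ∈ S, H ⊓ K ∈ S) (htriv : sInf S = ⊥)
    (L : Subgroup Γ) :
    ∃ σ : (LatticeCompletion S) → (LatticeCompletion S),
      Continuous σ ∧
      (∀ ℓ ∈ LhatIn L S, ∀ g, σ (ℓ * g) = σ g) ∧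
      (∀ g, ∃ ℓ ∈ LhatIn L S, g = ℓ * σ g) ∧
      ∀ S' : Set ((LhatIn L S) × (LhatIn L S)),
        IsGraphing (Set.range (toLhatIn L S)) S' →
        ∃ T : Set ((LatticeCompletion S) × (LatticeCompletion S)),
          IsGraphing (Set.range ((completionHom S).comp L.subtype)) T ∧
          ∃ t ∈ Set.range σ, S' = restrictGraph L S T t :=
  exists_transversal_graphing_general Γ S hfi L
end
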